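/- arXiv:2205.05647 — 3 statements merged into one kernel-verified Lean document; each statement's English description precedes it below -/
import Mathlib

section
/- For every tropical signomial f : ℝ → ℝ in one variable, the factorization length equals the monomial length: flen(f) = mlen(f). -/
/-- A tropical signomial: the pointwise maximum of a nonempty finite family of affine
functions. -/
def IsTropSig {E : Type*} [AddCommGroup E] [Module ℝ E] (f : E → ℝ) : Prop :=
  ∃ (A : Finset (E →ᵃ[ℝ] ℝ)) (h : A.Nonempty), ∀ x, f x = A.sup' h (fun a => a x)

/-- The monomial length of a tropical signomial: the minimum cardinality of a finite set of
affine functions whose pointwise maximum is `f`. -/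
noncomputable def mlen {E : Type*} [AddCommGroup E] [Module ℝ E] (f : E → ℝ) : ℕ :=
  sInf {k | ∃ (A : Finset (E →ᵃ[ℝ] ℝ)) (h : A.Nonempty),
    A.card = k ∧ ∀ x, f x = A.sup' h (fun a => a x)}

/-- The factorization length of a tropical signomial: the minimum over all decompositions
`f = f₁ + ⋯ + f_m` into tropical signomials of `(Σᵢ mlen fᵢ) − (m − 1)`. -/
noncomputable def flen {E : Type*} [AddCommGroup E] [Module ℝ E] (f : E → ℝ) : ℕ :=
  sInf {k | ∃ (m : ℕ) (_ : 0 < m) (F : Fin m → E → ℝ),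
    (∀ i, IsTropSig (F i)) ∧ (∀ x, f x = ∑ i, F i x) ∧
    k = (∑ i, mlen (F i)) - (m - 1)}

/-!
In one variable the right derivative of a tropical signomial `f` is a monotone step function, and
`mlen f` is the number of values it takes: a representation of `f` needs an affine function of each
of these slopes, and the affine functions realising them suffice. The right derivative of
`f₁ + ⋯ + f_m` is the sum of the right derivatives, and a sum of `m` monotone functions taking
`n₁, …, n_m` values takes at most `n₁ + ⋯ + n_m - (m - 1)` values.
-/

open Filter Topology Set

namespace AffineMap

theorem apply_sub_apply_eq_mul (a : ℝ →ᵃ[ℝ] ℝ) (x y : ℝ) : a y - a x = a.linear 1 * (y - x) := by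
  rw [← vsub_eq_sub, ← vsub_eq_sub, ← a.linearMap_vsub, vsub_eq_sub, mul_comm, ← smul_eq_mul,
    ← a.linear.map_smul, smul_eq_mul, mul_one]

theorem hasDerivAt_linear_one (a : ℝ →ᵃ[ℝ] ℝ) (x : ℝ) : HasDerivAt a (a.linear 1) x := by
  have ha : ⇑a = fun y => a.linear 1 * y + a 0 := by
    funext y; linarith [a.apply_sub_apply_eq_mul 0 y]
  rw [ha]
  simpa using ((hasDerivAt_id x).const_mul (a.linear 1)).add_const (a 0)

end AffineMap

section Minorant

variable {f : ℝ → ℝ} {a b : ℝ →ᵃ[ℝ] ℝ} {x y : ℝ}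

theorem linear_one_le_of_touch (ha : ∀ z, a z ≤ f z) (hb : ∀ z, b z ≤ f z)
    (hax : a x = f x) (hby : b y = f y) (hxy : x < y) : a.linear 1 ≤ b.linear 1 := by
  have h : a.linear 1 * (y - x) ≤ b.linear 1 * (y - x) := by
    rw [← a.apply_sub_apply_eq_mul, ← b.apply_sub_apply_eq_mul]
    linarith [ha y, hb x]
  exact le_of_mul_le_mul_right h (sub_pos.2 hxy)

theorem eq_of_touch_of_linear_one_eq (ha : ∀ z, a z ≤ f z) (hb : ∀ z, b z ≤ f z)
    (hax : a x = f x) (hby : b y = f y) (hab : a.linear 1 = b.linear 1) : a = b := by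
  ext z
  have hxz := a.apply_sub_apply_eq_mul x z
  have hxy := a.apply_sub_apply_eq_mul x y
  rw [hab] at hxz hxy
  linarith [ha y, hb x, b.apply_sub_apply_eq_mul x z, b.apply_sub_apply_eq_mul x y]

end Minorant

section SupOfAffine

variable {f : ℝ → ℝ} {A : Finset (ℝ →ᵃ[ℝ] ℝ)} {hA : A.Nonempty}

theorem apply_le_of_mem (hf : ∀ x, f x = A.sup' hA fun a => a x) {a : ℝ →ᵃ[ℝ] ℝ} (ha : a ∈ A)
    (x : ℝ) : a x ≤ f x :=
  (hf x).symm ▸ A.le_sup' (fun a => a x) ha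

/-- Among the affine functions active at `x`, one of maximal slope dominates the other active ones
to the right of `x`, and the inactive ones near `x` by continuity. -/
theorem exists_mem_eventuallyEq_nhdsGT (hf : ∀ x, f x = A.sup' hA fun a => a x) (x : ℝ) :
    ∃ a ∈ A, a x = f x ∧ f =ᶠ[𝓝[>] x] a := by
  classical
  have hactive : (A.filter fun b => b x = f x).Nonempty := by
    obtain ⟨b, hb, hbx⟩ := A.exists_mem_eq_sup' hA fun b => b x
    exact ⟨b, Finset.mem_filter.2 ⟨hb, by rw [hf, hbx]⟩⟩
  obtain ⟨a, ha, hmax⟩ := (A.filter fun b => b x = f x).exists_max_image (·.linear 1) hactive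
  obtain ⟨haA, hax⟩ := Finset.mem_filter.1 ha
  have hbelow : ∀ b ∈ A, ∀ᶠ y in 𝓝[>] x, b y ≤ a y := by
    intro b hb
    rcases (apply_le_of_mem hf hb x).eq_or_lt with hbx | hbx
    · have hslope := hmax b (Finset.mem_filter.2 ⟨hb, hbx⟩)
      filter_upwards [self_mem_nhdsWithin] with y (hy : x < y)
      nlinarith [a.apply_sub_apply_eq_mul x y, b.apply_sub_apply_eq_mul x y]
    · rw [← hax] at hbx
      exact nhdsWithin_le_nhds <|
        (b.continuous_of_finiteDimensional.continuousAt.eventually_lt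
          a.continuous_of_finiteDimensional.continuousAt hbx).mono fun _ => le_of_lt
  refine ⟨a, haA, hax, ?_⟩
  filter_upwards [(Filter.eventually_all_finset A).2 hbelow] with y hy
  rw [hf]
  exact le_antisymm (A.sup'_le hA _ hy) (A.le_sup' (fun b => b y) haA)

theorem exists_mem_hasDerivWithinAt_Ioi (hf : ∀ x, f x = A.sup' hA fun a => a x) (x : ℝ) :
    ∃ a ∈ A, a x = f x ∧ HasDerivWithinAt f (a.linear 1) (Ioi x) x := by
  obtain ⟨a, ha, hax, hfa⟩ := exists_mem_eventuallyEq_nhdsGT hf x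
  exact ⟨a, ha, hax,
    (a.hasDerivAt_linear_one x).hasDerivWithinAt.congr_of_eventuallyEq hfa hax.symm⟩

theorem differentiableWithinAt_Ioi (hf : ∀ x, f x = A.sup' hA fun a => a x) (x : ℝ) :
    DifferentiableWithinAt ℝ f (Ioi x) x :=
  let ⟨_, _, _, hderiv⟩ := exists_mem_hasDerivWithinAt_Ioi hf x
  hderiv.differentiableWithinAt

theorem monotone_derivWithin_Ioi (hf : ∀ x, f x = A.sup' hA fun a => a x) :
    Monotone fun x => derivWithin f (Ioi x) x := by
  intro x y hxy
  rcases hxy.eq_or_lt with rfl | hxy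
  · rfl
  obtain ⟨a, ha, hax, hderiv_a⟩ := exists_mem_hasDerivWithinAt_Ioi hf x
  obtain ⟨b, hb, hby, hderiv_b⟩ := exists_mem_hasDerivWithinAt_Ioi hf y
  dsimp only
  rw [hderiv_a.derivWithin (uniqueDiffWithinAt_Ioi x),
    hderiv_b.derivWithin (uniqueDiffWithinAt_Ioi y)]
  exact linear_one_le_of_touch (apply_le_of_mem hf ha) (apply_le_of_mem hf hb) hax hby hxy

theorem range_derivWithin_Ioi_subset (hf : ∀ x, f x = A.sup' hA fun a => a x) :
    (range fun x => derivWithin f (Ioi x) x) ⊆ A.image (·.linear 1) := by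
  rintro _ ⟨x, rfl⟩
  obtain ⟨a, ha, -, hderiv⟩ := exists_mem_hasDerivWithinAt_Ioi hf x
  dsimp only
  rw [hderiv.derivWithin (uniqueDiffWithinAt_Ioi x)]
  exact Finset.mem_coe.2 (Finset.mem_image_of_mem _ ha)

theorem finite_range_derivWithin_Ioi (hf : ∀ x, f x = A.sup' hA fun a => a x) :
    (range fun x => derivWithin f (Ioi x) x).Finite :=
  (A.image _).finite_toSet.subset (range_derivWithin_Ioi_subset hf)

theorem ncard_range_derivWithin_Ioi_le_card (hf : ∀ x, f x = A.sup' hA fun a => a x) :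
    (range fun x => derivWithin f (Ioi x) x).ncard ≤ A.card :=
  calc _ ≤ (A.image (·.linear 1) : Set ℝ).ncard :=
        ncard_le_ncard (range_derivWithin_Ioi_subset hf)
    _ ≤ A.card := by rw [ncard_coe_finset]; exact Finset.card_image_le

/-- The affine functions that realise a right derivative of `f` already represent `f`, and have
pairwise distinct slopes. -/
theorem exists_eq_sup'_card_le (hf : ∀ x, f x = A.sup' hA fun a => a x) :
    ∃ (B : Finset (ℝ →ᵃ[ℝ] ℝ)) (hB : B.Nonempty),
      B.card ≤ (range fun x => derivWithin f (Ioi x) x).ncard ∧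
        ∀ x, f x = B.sup' hB fun b => b x := by
  classical
  set B := A.filter fun a => ∃ x, a x = f x ∧ HasDerivWithinAt f (a.linear 1) (Ioi x) x
  have hmem : ∀ x, ∃ a ∈ B, a x = f x := fun x =>
    let ⟨a, ha, hax, hderiv⟩ := exists_mem_hasDerivWithinAt_Ioi hf x
    ⟨a, Finset.mem_filter.2 ⟨ha, x, hax, hderiv⟩, hax⟩
  obtain ⟨a₀, ha₀, -⟩ := hmem 0
  refine ⟨B, ⟨a₀, ha₀⟩, ?_, fun x => ?_⟩
  · have hinj : Set.InjOn (·.linear 1) (B : Set (ℝ →ᵃ[ℝ] ℝ)) := by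
      intro a ha b hb hab
      obtain ⟨haA, x, hax, -⟩ := Finset.mem_filter.1 ha
      obtain ⟨hbA, y, hby, -⟩ := Finset.mem_filter.1 hb
      exact eq_of_touch_of_linear_one_eq (apply_le_of_mem hf haA) (apply_le_of_mem hf hbA)
        hax hby hab
    rw [← Finset.card_image_of_injOn hinj, ← ncard_coe_finset]
    refine ncard_le_ncard ?_ (finite_range_derivWithin_Ioi hf)
    intro s hs
    obtain ⟨a, ha, rfl⟩ := Finset.mem_image.1 hs
    obtain ⟨-, x, -, hderiv⟩ := Finset.mem_filter.1 ha
    exact ⟨x, hderiv.derivWithin (uniqueDiffWithinAt_Ioi x)⟩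
  · obtain ⟨a, ha, hax⟩ := hmem x
    exact le_antisymm (hax ▸ B.le_sup' (fun b => b x) ha)
      (B.sup'_le _ _ fun b hb => apply_le_of_mem hf (A.filter_subset _ hb) x)

end SupOfAffine

theorem mlen_eq_ncard_range_derivWithin_Ioi {f : ℝ → ℝ} (hf : IsTropSig f) :
    mlen f = (range fun x => derivWithin f (Ioi x) x).ncard := by
  obtain ⟨A, hA, hrep⟩ := hf
  obtain ⟨B, hB, hBcard, hBrep⟩ := exists_eq_sup'_card_le hrep
  unfold mlen
  refine le_antisymm (le_trans (Nat.sInf_le ⟨B, hB, rfl, hBrep⟩) hBcard) ?_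
  refine le_csInf ⟨A.card, A, hA, rfl, hrep⟩ ?_
  rintro _ ⟨C, hC, rfl, hCrep⟩
  exact ncard_range_derivWithin_Ioi_le_card hCrep

noncomputable def valueRank {α β : Type*} [Preorder β] (φ : α → β) (x : α) : ℕ :=
  (range φ ∩ Iio (φ x)).ncard

section ValueRank

variable {α β : Type*} {φ : α → β}

theorem valueRank_lt_ncard_range [Preorder β] (hfin : (range φ).Finite) (x : α) :
    valueRank φ x < (range φ).ncard :=
  ncard_lt_ncard ((ssubset_iff_of_subset inter_subset_left).2
    ⟨φ x, mem_range_self x, fun h => lt_irrefl _ h.2⟩) hfin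

theorem valueRank_mono [Preorder α] [Preorder β] (hφ : Monotone φ) (hfin : (range φ).Finite)
    {x y : α} (hxy : x ≤ y) : valueRank φ x ≤ valueRank φ y :=
  ncard_le_ncard (inter_subset_inter_right _ (Iio_subset_Iio (hφ hxy)))
    (hfin.subset inter_subset_left)

theorem valueRank_lt_of_ne [Preorder α] [PartialOrder β] (hφ : Monotone φ)
    (hfin : (range φ).Finite) {x y : α} (hxy : x ≤ y) (hne : φ x ≠ φ y) :
    valueRank φ x < valueRank φ y :=
  ncard_lt_ncard ((ssubset_iff_of_subset (inter_subset_inter_right _ (Iio_subset_Iio (hφ hxy)))).2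
      ⟨φ x, ⟨mem_range_self x, lt_of_le_of_ne (hφ hxy) hne⟩, fun h => lt_irrefl _ h.2⟩)
    (hfin.subset inter_subset_left)

end ValueRank

/-- The total rank `∑ i, valueRank (φ i)` determines `∑ i, φ i`, because it strictly increases
wherever some `φ i` does. -/
theorem ncard_range_sum_add_card_le {α β ι : Type*} [LinearOrder α] [Nonempty α]
    [AddCommMonoid β] [PartialOrder β] [Fintype ι] {φ : ι → α → β}
    (hmono : ∀ i, Monotone (φ i)) (hfin : ∀ i, (range (φ i)).Finite) :
    (range fun x => ∑ i, φ i x).ncard + Fintype.card ι ≤ ∑ i, (range (φ i)).ncard + 1 := by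
  set R : α → ℕ := fun x => ∑ i, valueRank (φ i) x
  have hR_le : ∀ x, R x + Fintype.card ι ≤ ∑ i, (range (φ i)).ncard := fun x => by
    have : ∑ i, (valueRank (φ i) x + 1) ≤ ∑ i, (range (φ i)).ncard :=
      Finset.sum_le_sum fun i _ => valueRank_lt_ncard_range (hfin i) x
    simpa [Finset.sum_add_distrib] using this
  have heq_of_le : ∀ {x y}, x ≤ y → R x = R y → ∀ i, φ i x = φ i y := by
    intro x y hxy hR i
    by_contra hne
    exact (Finset.sum_lt_sum (fun j _ => valueRank_mono (hmono j) (hfin j) hxy)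
      ⟨i, Finset.mem_univ i, valueRank_lt_of_ne (hmono i) (hfin i) hxy hne⟩).ne hR
  have hfactor : Function.FactorsThrough (fun x => ∑ i, φ i x) R := fun x y hR =>
    Finset.sum_congr rfl fun i _ => (le_total x y).elim (fun h => heq_of_le h hR i)
      (fun h => (heq_of_le h hR.symm i).symm)
  have hR_range : range R ⊆ Iio (∑ i, (range (φ i)).ncard - Fintype.card ι + 1) := by
    rintro _ ⟨x, rfl⟩
    have := hR_le x
    rw [mem_Iio]
    omega
  obtain ⟨x₀⟩ := ‹Nonempty α›
  calc (range fun x => ∑ i, φ i x).ncard + Fintype.card ι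
      = (Function.extend R (fun x => ∑ i, φ i x) 0 '' range R).ncard + Fintype.card ι := by
        rw [← range_comp, hfactor.extend_comp]
    _ ≤ (range R).ncard + Fintype.card ι := by
        gcongr; exact ncard_image_le ((finite_Iio _).subset hR_range)
    _ ≤ ∑ i, (range (φ i)).ncard + 1 := by
        have := ncard_le_ncard hR_range (finite_Iio _)
        have := hR_le x₀
        rw [ncard_Iio_nat] at *
        omega

theorem flen_eq_mlen_one_var (f : ℝ → ℝ) (hf : IsTropSig f) : flen f = mlen f := by
  unfold flen
  refine le_antisymm (Nat.sInf_le ⟨1, one_pos, fun _ => f, fun _ => hf, by simp, by simp⟩) ?_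
  refine le_csInf ⟨_, 1, one_pos, fun _ => f, fun _ => hf, by simp, rfl⟩ ?_
  rintro _ ⟨m, hm, F, hF, hsum, rfl⟩
  choose A hA hrep using hF
  have hderiv_sum : (fun x => derivWithin f (Ioi x) x) =
      fun x => ∑ i, derivWithin (F i) (Ioi x) x := by
    funext x
    rw [show f = fun y => ∑ i, F i y from funext hsum]
    exact derivWithin_fun_sum fun i _ => differentiableWithinAt_Ioi (hrep i) x
  have hcount := ncard_range_sum_add_card_le (fun i => monotone_derivWithin_Ioi (hrep i))
    (fun i => finite_range_derivWithin_Ioi (hrep i))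
  rw [← hderiv_sum, ← mlen_eq_ncard_range_derivWithin_Ioi hf, Fintype.card_fin] at hcount
  simp only [← mlen_eq_ncard_range_derivWithin_Ioi ⟨A _, hA _, hrep _⟩] at hcount
  omega
end

section
/- Let φ : ℝ → ℝ admit at least one representation as a difference of tropical signomials. Then there exists a representation (f₀, g₀) of φ that is simultaneously minimal in both coordinates: for every representation (f, g) of φ, mlen(f₀) ≤ mlen(f) and mlen(g₀) ≤ mlen(g). -/
/-- `(f, g)` is a representation of `φ` as a difference of tropical signomials. -/
def IsRep {E : Type*} [AddCommGroup E] [Module ℝ E] (φ f g : E → ℝ) : Prop :=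
  IsTropSig f ∧ IsTropSig g ∧ ∀ x, φ x = f x - g x

open scoped Finset

noncomputable def ramp (t x : ℝ) : ℝ := max (x - t) 0

lemma AffineMap.apply_eq_linear_one_mul_add (a : ℝ →ᵃ[ℝ] ℝ) (x : ℝ) :
    a x = a.linear 1 * x + a 0 := by
  rw [congrFun a.decomp x]
  simpa [mul_comm] using a.linear.map_smul x 1

lemma min_eq_sub_ramp (x w : ℝ) : min x w = x - ramp w x := by
  simp only [ramp]; rcases le_total x w with h | h <;> simp [h]

lemma ramp_min_of_le {t w : ℝ} (h : t ≤ w) (x : ℝ) :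
    ramp t (min x w) = ramp t x - ramp w x := by
  simp only [ramp]
  rcases le_total x w with hx | hx
  · rw [min_eq_left hx, max_eq_right (by linarith : x - w ≤ 0), sub_zero]
  · rw [min_eq_right hx, max_eq_left (by linarith : 0 ≤ w - t),
      max_eq_left (by linarith : 0 ≤ x - t), max_eq_left (by linarith : 0 ≤ x - w)]
    ring

lemma ramp_min_of_ge {t w : ℝ} (h : w ≤ t) (x : ℝ) : ramp t (min x w) = 0 := by
  simp only [ramp]; exact max_eq_right (by linarith [min_le_right x w])

def rampSpan : Submodule ℝ (ℝ → ℝ) :=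
  Submodule.span ℝ (Set.range (fun a : ℝ →ᵃ[ℝ] ℝ => ⇑a) ∪ Set.range ramp)

lemma affineMap_mem_rampSpan (a : ℝ →ᵃ[ℝ] ℝ) : ⇑a ∈ rampSpan :=
  Submodule.subset_span (Or.inl ⟨a, rfl⟩)

lemma ramp_mem_rampSpan (t : ℝ) : ramp t ∈ rampSpan :=
  Submodule.subset_span (Or.inr ⟨t, rfl⟩)

lemma mem_rampSpan_iff {h : ℝ → ℝ} :
    h ∈ rampSpan ↔
      ∃ (a : ℝ →ᵃ[ℝ] ℝ) (δ : ℝ →₀ ℝ), h = a + Finsupp.linearCombination ℝ ramp δ := by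
  constructor
  · intro hh
    induction hh using Submodule.span_induction with
    | mem h hg =>
      rcases hg with ⟨a, rfl⟩ | ⟨t, rfl⟩
      · exact ⟨a, 0, by simp⟩
      · exact ⟨0, Finsupp.single t 1, by simp⟩
    | zero => exact ⟨0, 0, by simp⟩
    | add _ _ _ _ h₁ h₂ =>
      obtain ⟨a, δ, rfl⟩ := h₁
      obtain ⟨b, η, rfl⟩ := h₂
      exact ⟨a + b, δ + η, by simp only [AffineMap.coe_add, map_add]; abel⟩
    | smul c _ _ h =>
      obtain ⟨a, δ, rfl⟩ := h
      exact ⟨c • a, c • δ, by simp [smul_add]⟩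
  · rintro ⟨a, δ, rfl⟩
    refine add_mem (affineMap_mem_rampSpan a) (Submodule.span_mono Set.subset_union_right ?_)
    rw [← Finsupp.range_linearCombination]
    exact ⟨δ, rfl⟩

lemma comp_min_mem_rampSpan {h : ℝ → ℝ} (w : ℝ) (hh : h ∈ rampSpan) :
    (fun x => h (min x w)) ∈ rampSpan := by
  suffices rampSpan ≤ rampSpan.comap (LinearMap.funLeft ℝ ℝ (min · w)) from this hh
  refine Submodule.span_le.2 ?_
  rintro _ (⟨a, rfl⟩ | ⟨t, rfl⟩)
  · change (fun x => a (min x w)) ∈ rampSpan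
    have : (fun x => a (min x w)) = ⇑a - a.linear 1 • ramp w := by
      ext x
      rw [Pi.sub_apply, Pi.smul_apply, a.apply_eq_linear_one_mul_add,
        a.apply_eq_linear_one_mul_add x, min_eq_sub_ramp, smul_eq_mul]
      ring
    exact this ▸ sub_mem (affineMap_mem_rampSpan a)
      (Submodule.smul_mem _ _ (ramp_mem_rampSpan w))
  · change (fun x => ramp t (min x w)) ∈ rampSpan
    rcases le_total t w with htw | hwt
    · have : (fun x => ramp t (min x w)) = ramp t - ramp w := funext (ramp_min_of_le htw)
      exact this ▸ sub_mem (ramp_mem_rampSpan t) (ramp_mem_rampSpan w)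
    · have : (fun x => ramp t (min x w)) = 0 := funext (ramp_min_of_ge hwt)
      exact this ▸ zero_mem _

lemma sup_mem_rampSpan_of_antitone {h : ℝ → ℝ} (hh : h ∈ rampSpan) (hc : Continuous h)
    (b : ℝ →ᵃ[ℝ] ℝ) (hanti : Antitone (h - ⇑b)) : h ⊔ ⇑b ∈ rampSpan := by
  by_cases hle : h ≤ b
  · rw [sup_eq_right.2 hle]
    exact affineMap_mem_rampSpan b
  by_cases hge : ⇑b ≤ h
  · rw [sup_eq_left.2 hge]
    exact hh
  simp only [Pi.le_def, not_forall, not_le] at hle hge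
  obtain ⟨u, hu⟩ := hle
  obtain ⟨v, hv⟩ := hge
  obtain ⟨w, hw⟩ : ∃ w, (h - b) w = 0 :=
    intermediate_value_univ v u (hc.sub (AffineMap.continuous_of_finiteDimensional b))
      ⟨by simp only [Pi.sub_apply]; linarith, by simp only [Pi.sub_apply]; linarith⟩
  -- `h` dominates to the left of the crossing point `w`, and `b` to the right.
  have : h ⊔ ⇑b = (fun x => h (min x w)) + b.linear 1 • ramp w := by
    ext x
    simp only [Pi.sup_apply, Pi.add_apply, Pi.smul_apply, smul_eq_mul, ramp]
    rcases le_total x w with hx | hx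
    · have := hanti hx
      simp only [Pi.sub_apply] at this hw
      rw [max_eq_left (by linarith), min_eq_left hx, max_eq_right (by linarith)]
      ring
    · have := hanti hx
      simp only [Pi.sub_apply] at this hw
      rw [max_eq_right (by linarith), min_eq_right hx, max_eq_left (by linarith),
        b.apply_eq_linear_one_mul_add x, b.apply_eq_linear_one_mul_add w] at *
      linarith
  exact this ▸ add_mem (comp_min_mem_rampSpan w hh)
    (Submodule.smul_mem _ _ (ramp_mem_rampSpan w))

/-- Adding the pieces in order of increasing slope, each new piece overtakes the running maximum
at most once. -/
lemma IsTropSig.mem_rampSpan {f : ℝ → ℝ} (hf : IsTropSig f) : f ∈ rampSpan := by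
  classical
  obtain ⟨A, hA, hf⟩ := hf
  obtain rfl : f = fun x => A.sup' hA (· x) := funext hf
  clear hf
  induction A using Finset.induction_on_max_value (fun a : ℝ →ᵃ[ℝ] ℝ => a.linear 1) with
  | empty => exact absurd hA Finset.not_nonempty_empty
  | insert b s _ hslope ih =>
    rcases s.eq_empty_or_nonempty with rfl | hs
    · simpa using affineMap_mem_rampSpan b
    have hsup : (fun x => (insert b s).sup' hA (· x)) = (fun x => s.sup' hs (· x)) ⊔ ⇑b := by
      ext x
      exact (Finset.sup'_insert (H := hs) (f := (· x))).trans (sup_comm _ _)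
    rw [hsup]
    refine sup_mem_rampSpan_of_antitone (ih hs) (Continuous.finset_sup'_apply hs fun a _ =>
      AffineMap.continuous_of_finiteDimensional a) b fun x y hxy => ?_
    obtain ⟨a, ha, hay⟩ := Finset.exists_mem_eq_sup' hs (· y)
    simp only [Pi.sub_apply, hay]
    calc a y - b y ≤ a x - b x := by
          rw [a.apply_eq_linear_one_mul_add, a.apply_eq_linear_one_mul_add x,
            b.apply_eq_linear_one_mul_add, b.apply_eq_linear_one_mul_add x]
          nlinarith [hslope a ha]
      _ ≤ s.sup' hs (· x) - b x := sub_le_sub_right (Finset.le_sup' (· x) ha) _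

section
variable {E : Type*} [AddCommGroup E] [Module ℝ E]

lemma mlen_le_card {f : E → ℝ} (A : Finset (E →ᵃ[ℝ] ℝ)) (hA : A.Nonempty)
    (hf : ∀ x, f x = A.sup' hA (· x)) : mlen f ≤ #A :=
  Nat.sInf_le ⟨A, hA, rfl, hf⟩

lemma le_mlen {f : E → ℝ} (hf : IsTropSig f) {k : ℕ}
    (H : ∀ (A : Finset (E →ᵃ[ℝ] ℝ)) (hA : A.Nonempty), (∀ x, f x = A.sup' hA (· x)) → k ≤ #A) :
    k ≤ mlen f := by
  obtain ⟨A, hA, hfA⟩ := hf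
  exact le_csInf ⟨_, A, hA, rfl, hfA⟩ fun _ ⟨B, hB, hcard, hfB⟩ => hcard ▸ H B hB hfB

lemma IsTropSig.convexOn {f : E → ℝ} (hf : IsTropSig f) : ConvexOn ℝ Set.univ f := by
  obtain ⟨A, hA, hfA⟩ := hf
  have : f = A.sup' hA (fun a => ⇑a) := funext fun x => by rw [hfA, Finset.sup'_apply]
  rw [this]
  refine Finset.sup'_induction hA _ (fun _ h₁ _ h₂ => h₁.sup h₂) fun a _ => ?_
  exact ⟨convex_univ, fun x _ y _ s t _ _ hst => (Convex.combo_affine_apply hst).le⟩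

lemma ConvexOn.eq_of_mem_segment {f : E → ℝ} (hf : ConvexOn ℝ Set.univ f) {a : E →ᵃ[ℝ] ℝ}
    (ha : ∀ x, a x ≤ f x) {u v x : E} (hu : f u = a u) (hv : f v = a v)
    (hx : x ∈ segment ℝ u v) : f x = a x := by
  obtain ⟨s, t, hs, ht, hst, rfl⟩ := hx
  refine le_antisymm ?_ (ha _)
  calc f (s • u + t • v) ≤ s • f u + t • f v := hf.2 trivial trivial hs ht hst
    _ = a (s • u + t • v) := by rw [hu, hv, Convex.combo_affine_apply hst]

end

def secondDiff (p ε : ℝ) : (ℝ → ℝ) →ₗ[ℝ] ℝ :=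
  LinearMap.proj (p + ε) - (2 : ℝ) • LinearMap.proj p + LinearMap.proj (p - ε)

@[simp] lemma secondDiff_apply (p ε : ℝ) (h : ℝ → ℝ) :
    secondDiff p ε h = h (p + ε) - 2 * h p + h (p - ε) := rfl

lemma secondDiff_ramp_self {ε : ℝ} (hε : 0 ≤ ε) (p : ℝ) : secondDiff p ε (ramp p) = ε := by
  simp [ramp, hε]

lemma secondDiff_ramp_of_notMem_Ioo {t p ε : ℝ} (hε : 0 ≤ ε)
    (h : t ∉ Set.Ioo (p - ε) (p + ε)) : secondDiff p ε (ramp t) = 0 := by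
  simp only [secondDiff_apply, ramp]
  rcases not_and_or.1 h with h | h <;> rw [not_lt] at h
  · rw [max_eq_left (by linarith), max_eq_left (by linarith), max_eq_left (by linarith)]; ring
  · rw [max_eq_right (by linarith), max_eq_right (by linarith), max_eq_right (by linarith)]; ring

lemma secondDiff_affineMap (a : ℝ →ᵃ[ℝ] ℝ) (p ε : ℝ) : secondDiff p ε a = 0 := by
  rw [secondDiff_apply, a.apply_eq_linear_one_mul_add (p + ε), a.apply_eq_linear_one_mul_add p,
    a.apply_eq_linear_one_mul_add (p - ε)]
  ring

lemma ConvexOn.secondDiff_nonneg {g : ℝ → ℝ} (hg : ConvexOn ℝ Set.univ g) (p ε : ℝ) :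
    0 ≤ secondDiff p ε g := by
  have := hg.2 trivial trivial (by norm_num : (0 : ℝ) ≤ 1 / 2) (by norm_num : (0 : ℝ) ≤ 1 / 2)
    (by norm_num) (x := p + ε) (y := p - ε)
  rw [show (1 / 2 : ℝ) • (p + ε) + (1 / 2 : ℝ) • (p - ε) = p by simp only [smul_eq_mul]; ring,
    smul_eq_mul, smul_eq_mul] at this
  rw [secondDiff_apply]
  linarith

lemma ConvexOn.secondDiff_eq_zero {f : ℝ → ℝ} (hf : ConvexOn ℝ Set.univ f)
    {a : ℝ →ᵃ[ℝ] ℝ} (ha : ∀ x, a x ≤ f x) {u v p ε : ℝ} (hu : f u = a u) (hv : f v = a v)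
    (hε : 0 ≤ ε) (hup : u ≤ p - ε) (hpv : p + ε ≤ v) : secondDiff p ε f = 0 := by
  have hfa : ∀ x ∈ Set.Icc u v, f x = a x := fun x hx =>
    hf.eq_of_mem_segment ha hu hv (segment_eq_Icc (hx.1.trans hx.2) ▸ hx)
  rw [secondDiff_apply, hfa _ ⟨by linarith, hpv⟩, hfa _ ⟨by linarith, by linarith⟩,
    hfa _ ⟨hup, by linarith⟩, ← secondDiff_apply, secondDiff_affineMap]

lemma card_add_one_le_card_of_secondDiff_pos (A : Finset (ℝ →ᵃ[ℝ] ℝ)) (hA : A.Nonempty)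
    {P : Finset ℝ} {ε : ℝ} (hε : 0 ≤ ε) (hsep : ∀ p ∈ P, ∀ q ∈ P, p < q → p + 2 * ε ≤ q)
    (hpos : ∀ p ∈ P, 0 < secondDiff p ε (fun x => A.sup' hA (· x))) : #P + 1 ≤ #A := by
  set F := fun x => A.sup' hA (· x)
  have hconv : ConvexOn ℝ Set.univ F := IsTropSig.convexOn ⟨A, hA, fun _ => rfl⟩
  choose act hactA hact using fun x => Finset.exists_mem_eq_sup' hA (· x)
  have hne : ∀ p ∈ P, ∀ u v, u ≤ p - ε → p + ε ≤ v → act u ≠ act v := fun p hp u v hu hv heq =>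
    (hpos p hp).ne' (hconv.secondDiff_eq_zero (fun y => Finset.le_sup' (· y) (hactA u)) (hact u)
      (heq ▸ hact v) hε hu hv)
  -- With `b` below `P`, the points `q + ε`, `q ∈ insert b P`, lie in the `#P + 1` gaps of `P`.
  obtain ⟨m, hm⟩ := P.bddBelow
  set b := m - 2 * ε - 1
  have hb : ∀ p ∈ P, b + 2 * ε < p := fun p hp => by linarith [hm hp]
  have hbP : b ∉ P := fun h => by linarith [hb b h]
  have hD : ∀ q ∈ insert b P, ∀ q' ∈ insert b P, q < q' → q' ∈ P ∧ q + 2 * ε ≤ q' := by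
    intro q hq q' hq' hlt
    rcases Finset.mem_insert.1 hq with rfl | hq <;> rcases Finset.mem_insert.1 hq' with rfl | hq'
    · exact absurd hlt (lt_irrefl _)
    · exact ⟨hq', (hb q' hq').le⟩
    · linarith [hb q hq]
    · exact ⟨hq', hsep q hq q' hq' hlt⟩
  have hinj : Set.InjOn (fun q => act (q + ε)) ↑(insert b P) := by
    intro q hq q' hq' heq
    by_contra hqq'
    rcases lt_or_gt_of_ne hqq' with hlt | hlt
    · obtain ⟨hq'P, hle⟩ := hD q hq q' hq' hlt
      exact hne q' hq'P _ _ (by linarith) le_rfl heq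
    · obtain ⟨hqP, hle⟩ := hD q' hq' q hq hlt
      exact hne q hqP _ _ (by linarith) le_rfl heq.symm
  calc #P + 1 = #(insert b P) := (Finset.card_insert_of_notMem hbP).symm
    _ ≤ #A := Finset.card_le_card_of_injOn _ (fun q _ => hactA _) hinj

lemma Finset.exists_pos_forall_add_le (T : Finset ℝ) :
    ∃ ε > 0, ∀ p ∈ T, ∀ q ∈ T, p < q → p + ε ≤ q := by
  have : ∀ᶠ ε in nhdsWithin (0 : ℝ) (Set.Ioi 0), ∀ p ∈ T, ∀ q ∈ T, p < q → p + ε ≤ q := by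
    simp only [Filter.eventually_all_finset, Filter.eventually_imp_distrib_left]
    intro p _ q _ hpq
    filter_upwards [nhdsWithin_le_nhds (eventually_le_nhds (sub_pos.2 hpq))] with ε hε
    linarith
  obtain ⟨ε, hε, hpos⟩ := (this.and self_mem_nhdsWithin).exists
  exact ⟨ε, hpos, hε⟩

lemma secondDiff_linearCombination_ramp {δ : ℝ →₀ ℝ} {p ε : ℝ} (hε : 0 ≤ ε)
    (hsep : ∀ t ∈ δ.support, t ≠ p → t ∉ Set.Ioo (p - ε) (p + ε)) :
    secondDiff p ε (Finsupp.linearCombination ℝ ramp δ) = δ p * ε := by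
  rw [Finsupp.apply_linearCombination, Finsupp.linearCombination_apply, Finsupp.sum,
    Finset.sum_eq_single p]
  · simp [secondDiff_ramp_self hε]
  · intro t ht htp
    simp [secondDiff_ramp_of_notMem_Ioo hε (hsep t ht htp)]
  · intro hp
    simp [Finsupp.notMem_support_iff.1 hp]

lemma card_support_posPart_add_one_le_mlen {f g : ℝ → ℝ} (hf : IsTropSig f) (hg : IsTropSig g)
    {a : ℝ →ᵃ[ℝ] ℝ} {δ : ℝ →₀ ℝ} (hfg : f - g = ⇑a + Finsupp.linearCombination ℝ ramp δ) :
    #δ⁺.support + 1 ≤ mlen f := by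
  obtain ⟨ε, hε, hsep⟩ := δ.support.exists_pos_forall_add_le
  have hpos : ∀ {t}, t ∈ δ⁺.support → 0 < δ t := fun ht => by
    simpa [posPart_def] using ht
  refine le_mlen hf fun A hA hfA => ?_
  have hF : (fun x => A.sup' hA (· x)) = f := (funext hfA).symm
  refine card_add_one_le_card_of_secondDiff_pos A hA (half_pos hε).le
    (fun p hp q hq hpq => ?_) fun p hp => ?_
  · have := hsep p (Finsupp.mem_support_iff.2 (hpos hp).ne') q
      (Finsupp.mem_support_iff.2 (hpos hq).ne') hpq
    linarith
  · have hφ : secondDiff p (ε / 2) (f - g) = δ p * (ε / 2) := by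
      rw [hfg, map_add, secondDiff_affineMap, zero_add]
      refine secondDiff_linearCombination_ramp (half_pos hε).le fun t ht htp ⟨h₁, h₂⟩ => ?_
      rcases lt_or_gt_of_ne htp with h | h
      · linarith [hsep t ht p (Finsupp.mem_support_iff.2 (hpos hp).ne') h]
      · linarith [hsep p (Finsupp.mem_support_iff.2 (hpos hp).ne') t ht h]
    have hg2 := hg.convexOn.secondDiff_nonneg p (ε / 2)
    rw [map_sub] at hφ
    rw [hF]
    nlinarith [hpos hp]

lemma linearCombination_ramp_apply (δ : ℝ →₀ ℝ) (x : ℝ) :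
    Finsupp.linearCombination ℝ ramp δ x = ∑ t ∈ δ.support, δ t * ramp t x := by
  simp [Finsupp.linearCombination_apply, Finsupp.sum]

lemma sum_mul_ramp_eq_sum_filter (T : Finset ℝ) (δ : ℝ → ℝ) (x : ℝ) :
    ∑ t ∈ T, δ t * ramp t x = ∑ t ∈ T with t ≤ x, δ t * (x - t) := by
  rw [Finset.sum_filter]
  refine Finset.sum_congr rfl fun t _ => ?_
  simp only [ramp]
  split_ifs with h
  · rw [max_eq_left (by linarith)]
  · rw [max_eq_right (by linarith), mul_zero]

lemma sum_mul_sub_le_sum_mul_ramp {S T : Finset ℝ} (hST : S ⊆ T) {δ : ℝ → ℝ}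
    (hδ : ∀ t ∈ T, 0 ≤ δ t) (x : ℝ) : ∑ t ∈ S, δ t * (x - t) ≤ ∑ t ∈ T, δ t * ramp t x :=
  calc ∑ t ∈ S, δ t * (x - t) ≤ ∑ t ∈ S, δ t * ramp t x :=
        Finset.sum_le_sum fun t ht => mul_le_mul_of_nonneg_left (le_max_left _ _) (hδ t (hST ht))
    _ ≤ ∑ t ∈ T, δ t * ramp t x :=
        Finset.sum_le_sum_of_subset_of_nonneg hST fun t ht _ =>
          mul_nonneg (hδ t ht) (le_max_right _ _)

lemma Finset.filter_coe_le_max_filter_le {α : Type*} [LinearOrder α] (T : Finset α) (x : α) :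
    T.filter (fun t : α => (t : WithBot α) ≤ (T.filter (· ≤ x)).max) = T.filter (· ≤ x) := by
  ext t
  simp only [Finset.mem_filter, and_congr_right_iff]
  refine fun ht => ⟨fun h => WithBot.coe_le_coe.1 (h.trans (Finset.max_le fun s hs =>
    WithBot.coe_le_coe.2 (Finset.mem_filter.1 hs).2)), fun h => Finset.le_max ?_⟩
  exact Finset.mem_filter.2 ⟨ht, h⟩

lemma exists_sup'_eq_affineMap_add_linearCombination_ramp (a₀ : ℝ →ᵃ[ℝ] ℝ) {δ : ℝ →₀ ℝ}
    (hδ : 0 ≤ δ) : ∃ (A : Finset (ℝ →ᵃ[ℝ] ℝ)) (hA : A.Nonempty), #A ≤ #δ.support + 1 ∧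
      ∀ x, (⇑a₀ + Finsupp.linearCombination ℝ ramp δ) x = A.sup' hA (· x) := by
  classical
  set T := δ.support
  -- The piece of index `β` switches on exactly the ramps with breakpoint `t ≤ β`.
  let M : WithBot ℝ → ℝ →ᵃ[ℝ] ℝ := fun β =>
    a₀ + (∑ t ∈ T.filter (fun t : ℝ => (t : WithBot ℝ) ≤ β), δ t) • AffineMap.id ℝ ℝ -
      AffineMap.const ℝ ℝ (∑ t ∈ T.filter (fun t : ℝ => (t : WithBot ℝ) ≤ β), δ t * t)
  have hM : ∀ β x,
      M β x = a₀ x + ∑ t ∈ T.filter (fun t : ℝ => (t : WithBot ℝ) ≤ β), δ t * (x - t) :=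
    fun β x => by
      simp only [M, AffineMap.coe_sub, AffineMap.coe_add, AffineMap.coe_smul, AffineMap.coe_id,
        AffineMap.coe_const, Pi.sub_apply, Pi.add_apply, Pi.smul_apply, id_eq, smul_eq_mul,
        Function.const_apply, Finset.sum_mul, mul_sub, Finset.sum_sub_distrib]
      ring
  have hI : ∀ x, (T.filter (· ≤ x)).max ∈ insert ⊥ (T.image (↑)) := fun x =>
    Finset.mem_of_subset (Finset.insert_subset_insert _ (Finset.image_subset_image
      (Finset.filter_subset _ _))) (Finset.max_mem_insert_bot_image_coe _)
  refine ⟨(insert ⊥ (T.image (↑))).image M, (Finset.insert_nonempty _ _).image M, ?_, fun x => ?_⟩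
  · exact Finset.card_image_le.trans ((Finset.card_insert_le _ _).trans
      (Nat.add_le_add_right Finset.card_image_le 1))
  rw [Pi.add_apply, linearCombination_ramp_apply]
  refine le_antisymm ?_ (Finset.sup'_le _ _ ?_)
  · -- At `x`, the piece indexed by the last breakpoint `≤ x` is active.
    calc a₀ x + ∑ t ∈ T, δ t * ramp t x = M (T.filter (· ≤ x)).max x := by
          rw [hM, Finset.filter_coe_le_max_filter_le, sum_mul_ramp_eq_sum_filter]
      _ ≤ _ := Finset.le_sup' (· x) (Finset.mem_image_of_mem M (hI x))
  · rintro _ hm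
    obtain ⟨β, -, rfl⟩ := Finset.mem_image.1 hm
    rw [hM]
    exact add_le_add le_rfl
      (sum_mul_sub_le_sum_mul_ramp (Finset.filter_subset _ _) (fun t _ => hδ t) x)

theorem exists_simultaneously_minimal_representation_one_var
    (φ : ℝ → ℝ) (h : ∃ f g : ℝ → ℝ, IsRep φ f g) :
    ∃ f₀ g₀ : ℝ → ℝ, IsRep φ f₀ g₀ ∧
      ∀ f g : ℝ → ℝ, IsRep φ f g → mlen f₀ ≤ mlen f ∧ mlen g₀ ≤ mlen g := by
  obtain ⟨F, G, hF, hG, hFG⟩ := h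
  obtain ⟨a, δ, hφ⟩ := mem_rampSpan_iff.1
    ((funext hFG : φ = F - G) ▸ sub_mem hF.mem_rampSpan hG.mem_rampSpan)
  -- Split the breakpoints of `φ` by the sign of their slope jump.
  obtain ⟨A, hA, hAcard, hAeq⟩ := exists_sup'_eq_affineMap_add_linearCombination_ramp a
    (posPart_nonneg δ)
  obtain ⟨B, hB, hBcard, hBeq⟩ := exists_sup'_eq_affineMap_add_linearCombination_ramp 0
    (posPart_nonneg (-δ))
  refine ⟨_, _, ⟨⟨A, hA, hAeq⟩, ⟨B, hB, hBeq⟩, fun x => ?_⟩, fun f g ⟨hf, hg, hfg⟩ => ⟨?_, ?_⟩⟩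
  · have hsplit : Finsupp.linearCombination ℝ ramp δ =
        Finsupp.linearCombination ℝ ramp δ⁺ - Finsupp.linearCombination ℝ ramp (-δ)⁺ := by
      rw [posPart_neg, ← map_sub, posPart_sub_negPart]
    simp only [hφ, hsplit, Pi.add_apply, Pi.sub_apply, AffineMap.coe_zero, Pi.zero_apply]
    ring
  · refine (mlen_le_card A hA hAeq).trans
      (hAcard.trans (card_support_posPart_add_one_le_mlen hf hg (a := a) ?_))
    ext x
    rw [Pi.sub_apply, ← hfg, hφ]
  · refine (mlen_le_card B hB hBeq).trans
      (hBcard.trans (card_support_posPart_add_one_le_mlen hg hf (a := -a) ?_))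
    ext x
    have := hfg x
    simp only [hφ, Pi.add_apply] at this
    simp only [Pi.sub_apply, Pi.add_apply, AffineMap.coe_neg, Pi.neg_apply, map_neg]
    linarith
end

section
/- Let φ : ℝ → ℝ admit a representation as a difference of tropical signomials. A representation (f, g) of φ is minimal (i.e. mlen(f) and mlen(g) are both minimal over all representations of φ) if and only if it is reduced in the sense that N(f) ∩ N(g) = ∅, where N(h) is the set of points at which h is not differentiable. -/
/-- A representation is minimal if its two monomial lengths are simultaneously minimal among
all representations of `φ`. -/
def IsMinimalRep {E : Type*} [AddCommGroup E] [Module ℝ E] (φ f₀ g₀ : E → ℝ) : Prop :=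
  IsRep φ f₀ g₀ ∧ ∀ f g : E → ℝ, IsRep φ f g → mlen f₀ ≤ mlen f ∧ mlen g₀ ≤ mlen g

/-- The non-differentiability locus of `f` (the tropical hypersurface of `f`). -/
def Ndiff {E : Type*} [NormedAddCommGroup E] [NormedSpace ℝ E] (f : E → ℝ) : Set E :=
  {x | ¬ DifferentiableAt ℝ f x}

/-!
In one variable a tropical signomial `f` is convex and piecewise affine: at every point it has a
left and a right slope, realised by pieces touching `f` there, and `f` is non-differentiable
exactly where the two differ. Its monomial length is the number of distinct right slopes, and
two points with different right slopes are separated by a breakpoint, so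
`Ndiff f ⊆ Ndiff f'` forces `mlen f ≤ mlen f'`.

If `N(f) ∩ N(g) = ∅` and `(f', g')` is another representation of `φ = f - g`, then at a breakpoint
of `f` the slope jump of `φ` is that of `f`, hence `f' = φ + g'` breaks there too; so
`mlen f ≤ mlen f'`, and symmetrically for `g`. Conversely, at a common breakpoint `x₀` of `f` and
`g`, subtracting `ε * max (t - x₀) 0` from both, with `ε` the smaller of the two slope jumps, keeps
both tropical signomials and merges two pieces of one of them.
-/

open Set Filter Topology

lemma AffineMap.apply_eq_add_linear_one_mul (p : ℝ →ᵃ[ℝ] ℝ) (x y : ℝ) :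
    p y = p x + p.linear 1 * (y - x) := by
  have h := p.linearMap_vsub y x
  rw [vsub_eq_sub, vsub_eq_sub, ← mul_one (y - x), ← smul_eq_mul, p.linear.map_smul,
    smul_eq_mul] at h
  linarith

noncomputable def leftSlope (f : ℝ → ℝ) (x : ℝ) : ℝ := derivWithin f (Iic x) x

noncomputable def rightSlope (f : ℝ → ℝ) (x : ℝ) : ℝ := derivWithin f (Ici x) x

section OneSided

variable {f : ℝ → ℝ} {x a : ℝ}

lemma hasDerivWithinAt_of_eventually_eq_line {s : Set ℝ}
    (h : ∀ᶠ y in 𝓝[s] x, f y = f x + a * (y - x)) : HasDerivWithinAt f a s x := by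
  have hline : HasDerivAt (fun y => f x + a * (y - x)) a x := by
    simpa using ((hasDerivAt_id x).sub_const x).const_mul a |>.const_add (f x)
  exact hline.hasDerivWithinAt.congr_of_eventuallyEq h (by simp)

lemma leftSlope_eq_of_eventually (h : ∀ᶠ y in 𝓝[≤] x, f y = f x + a * (y - x)) :
    leftSlope f x = a :=
  (hasDerivWithinAt_of_eventually_eq_line h).derivWithin (uniqueDiffWithinAt_Iic x)

lemma rightSlope_eq_of_eventually (h : ∀ᶠ y in 𝓝[≥] x, f y = f x + a * (y - x)) :
    rightSlope f x = a :=
  (hasDerivWithinAt_of_eventually_eq_line h).derivWithin (uniqueDiffWithinAt_Ici x)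

end OneSided

def IsUpperEnvelope (A : Finset (ℝ →ᵃ[ℝ] ℝ)) (f : ℝ → ℝ) : Prop :=
  (∀ p ∈ A, ∀ x, p x ≤ f x) ∧ ∀ x, ∃ p ∈ A, p x = f x

lemma isUpperEnvelope_iff {A : Finset (ℝ →ᵃ[ℝ] ℝ)} {f : ℝ → ℝ} :
    IsUpperEnvelope A f ↔ ∃ hA : A.Nonempty, ∀ x, f x = A.sup' hA (fun p => p x) := by
  refine ⟨fun ⟨hle, htouch⟩ => ⟨?_, fun x => ?_⟩, fun ⟨hA, hf⟩ => ⟨?_, fun x => ?_⟩⟩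
  · obtain ⟨p, hp, -⟩ := htouch 0
    exact ⟨p, hp⟩
  · obtain ⟨p, hp, hpx⟩ := htouch x
    exact le_antisymm (hpx ▸ Finset.le_sup' (fun p => p x) hp)
      (Finset.sup'_le _ _ fun q hq => hle q hq x)
  · exact fun p hp x => hf x ▸ Finset.le_sup' (fun p => p x) hp
  · obtain ⟨p, hp, hpx⟩ := Finset.exists_mem_eq_sup' hA (fun p => p x)
    exact ⟨p, hp, (hf x ▸ hpx).symm⟩

lemma isTropSig_iff_exists_isUpperEnvelope {f : ℝ → ℝ} :
    IsTropSig f ↔ ∃ A, IsUpperEnvelope A f := by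
  simp only [IsTropSig, isUpperEnvelope_iff]

namespace IsUpperEnvelope

variable {A : Finset (ℝ →ᵃ[ℝ] ℝ)} {f : ℝ → ℝ}

lemma isTropSig (h : IsUpperEnvelope A f) : IsTropSig f :=
  isTropSig_iff_exists_isUpperEnvelope.2 ⟨A, h⟩

lemma mlen_le_card (h : IsUpperEnvelope A f) : mlen f ≤ A.card := by
  obtain ⟨hA, hf⟩ := isUpperEnvelope_iff.1 h
  exact Nat.sInf_le ⟨A, hA, rfl, hf⟩

lemma continuous (h : IsUpperEnvelope A f) : Continuous f := by
  obtain ⟨hA, hf⟩ := isUpperEnvelope_iff.1 h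
  rw [funext hf]
  exact Continuous.finset_sup'_apply hA fun p _ => p.continuous_of_finiteDimensional

lemma add_linear_one_mul_le (h : IsUpperEnvelope A f) {p : ℝ →ᵃ[ℝ] ℝ} (hp : p ∈ A) {x : ℝ}
    (hpx : p x = f x) (y : ℝ) : f x + p.linear 1 * (y - x) ≤ f y := by
  rw [← hpx, ← p.apply_eq_add_linear_one_mul]
  exact h.1 p hp y

lemma eventually_eq_imp_eq (h : IsUpperEnvelope A f) (x : ℝ) :
    ∀ᶠ y in 𝓝 x, ∀ p ∈ A, p y = f y → p x = f x := by
  refine (eventually_all_finset A).2 fun p hp => ?_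
  rcases (h.1 p hp x).eq_or_lt with hx | hx
  · exact Eventually.of_forall fun _ _ => hx
  · filter_upwards [p.continuous_of_finiteDimensional.continuousAt.eventually_lt
      h.continuous.continuousAt hx] with y hy hpy
    exact absurd hpy hy.ne

lemma exists_left_right (h : IsUpperEnvelope A f) (x : ℝ) :
    ∃ p ∈ A, ∃ q ∈ A, p x = f x ∧ q x = f x ∧
      (∀ᶠ y in 𝓝[≤] x, f y = f x + p.linear 1 * (y - x)) ∧
      ∀ᶠ y in 𝓝[≥] x, f y = f x + q.linear 1 * (y - x) := by
  classical
  set M := A.filter (fun p => p x = f x)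
  -- Near `x` only the pieces active at `x` can be active, and the extreme slopes among them
  -- govern the two sides of `x`.
  have hM : M.Nonempty := by
    obtain ⟨p, hp, hpx⟩ := h.2 x
    exact ⟨p, Finset.mem_filter.2 ⟨hp, hpx⟩⟩
  obtain ⟨p, hpM, hp⟩ := M.exists_min_image (fun p => p.linear 1) hM
  obtain ⟨q, hqM, hq⟩ := M.exists_max_image (fun p => p.linear 1) hM
  have hM_apply : ∀ r ∈ M, ∀ y, r y = f x + r.linear 1 * (y - x) := fun r hr y => by
    rw [r.apply_eq_add_linear_one_mul x y, (Finset.mem_filter.1 hr).2]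
  have hactive : ∀ᶠ y in 𝓝 x, ∃ r ∈ M, r y = f y := by
    filter_upwards [h.eventually_eq_imp_eq x] with y hy
    obtain ⟨r, hr, hry⟩ := h.2 y
    exact ⟨r, Finset.mem_filter.2 ⟨hr, hy r hr hry⟩, hry⟩
  rw [Finset.mem_filter] at hpM hqM
  refine ⟨p, hpM.1, q, hqM.1, hpM.2, hqM.2, ?_, ?_⟩
  · filter_upwards [nhdsWithin_le_nhds hactive, self_mem_nhdsWithin]
      with y ⟨r, hrM, hry⟩ (hyx : y ≤ x)
    refine le_antisymm ?_ (h.add_linear_one_mul_le hpM.1 hpM.2 y)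
    rw [← hry, hM_apply r hrM]
    nlinarith [hp r hrM]
  · filter_upwards [nhdsWithin_le_nhds hactive, self_mem_nhdsWithin]
      with y ⟨r, hrM, hry⟩ (hxy : x ≤ y)
    refine le_antisymm ?_ (h.add_linear_one_mul_le hqM.1 hqM.2 y)
    rw [← hry, hM_apply r hrM]
    nlinarith [hq r hrM]

lemma exists_mem_linear_one_eq_leftSlope (h : IsUpperEnvelope A f) (x : ℝ) :
    ∃ p ∈ A, p x = f x ∧ p.linear 1 = leftSlope f x := by
  obtain ⟨p, hpA, q, -, hpx, -, hp, -⟩ := h.exists_left_right x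
  exact ⟨p, hpA, hpx, (leftSlope_eq_of_eventually hp).symm⟩

lemma exists_mem_linear_one_eq_rightSlope (h : IsUpperEnvelope A f) (x : ℝ) :
    ∃ q ∈ A, q x = f x ∧ q.linear 1 = rightSlope f x := by
  obtain ⟨p, -, q, hqA, -, hqx, -, hq⟩ := h.exists_left_right x
  exact ⟨q, hqA, hqx, (rightSlope_eq_of_eventually hq).symm⟩

lemma eq_of_linear_one_eq (h : IsUpperEnvelope A f) {p q : ℝ →ᵃ[ℝ] ℝ} (hp : p ∈ A)
    (hq : q ∈ A) {x y : ℝ} (hpx : p x = f x) (hqy : q y = f y)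
    (hpq : p.linear 1 = q.linear 1) : p = q := by
  have hqx := h.1 q hq x
  have hpy := h.1 p hp y
  have hp_apply := p.apply_eq_add_linear_one_mul x y
  have hq_apply := q.apply_eq_add_linear_one_mul x y
  rw [hpq] at hp_apply
  ext t
  rw [p.apply_eq_add_linear_one_mul x t, q.apply_eq_add_linear_one_mul x t, hpq]
  linarith

lemma range_rightSlope_subset (h : IsUpperEnvelope A f) :
    range (rightSlope f) ⊆ (fun p : ℝ →ᵃ[ℝ] ℝ => p.linear 1) '' A := by
  rintro _ ⟨x, rfl⟩
  obtain ⟨q, hq, -, hqs⟩ := h.exists_mem_linear_one_eq_rightSlope x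
  exact ⟨q, hq, hqs⟩

end IsUpperEnvelope

namespace IsTropSig

variable {f : ℝ → ℝ} {x y s : ℝ}

lemma exists_isUpperEnvelope_card_eq_mlen (hf : IsTropSig f) :
    ∃ A, IsUpperEnvelope A f ∧ A.card = mlen f := by
  obtain ⟨A, hA, hfA⟩ := hf
  obtain ⟨B, hB, hcard, hfB⟩ := Nat.sInf_mem (s := {k | ∃ (A : Finset (ℝ →ᵃ[ℝ] ℝ))
    (h : A.Nonempty), A.card = k ∧ ∀ x, f x = A.sup' h (fun a => a x)}) ⟨_, A, hA, rfl, hfA⟩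
  exact ⟨B, isUpperEnvelope_iff.2 ⟨hB, hfB⟩, hcard⟩

lemma continuous (hf : IsTropSig f) : Continuous f :=
  let ⟨_, hA⟩ := isTropSig_iff_exists_isUpperEnvelope.1 hf; hA.continuous

lemma eventually_nhdsLE (hf : IsTropSig f) (x : ℝ) :
    ∀ᶠ y in 𝓝[≤] x, f y = f x + leftSlope f x * (y - x) := by
  obtain ⟨A, hA⟩ := isTropSig_iff_exists_isUpperEnvelope.1 hf
  obtain ⟨p, -, q, -, -, -, hp, -⟩ := hA.exists_left_right x
  rwa [leftSlope_eq_of_eventually hp]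

lemma eventually_nhdsGE (hf : IsTropSig f) (x : ℝ) :
    ∀ᶠ y in 𝓝[≥] x, f y = f x + rightSlope f x * (y - x) := by
  obtain ⟨A, hA⟩ := isTropSig_iff_exists_isUpperEnvelope.1 hf
  obtain ⟨p, -, q, -, -, -, -, hq⟩ := hA.exists_left_right x
  rwa [rightSlope_eq_of_eventually hq]

lemma add_leftSlope_mul_le (hf : IsTropSig f) (x y : ℝ) :
    f x + leftSlope f x * (y - x) ≤ f y := by
  obtain ⟨A, hA⟩ := isTropSig_iff_exists_isUpperEnvelope.1 hf
  obtain ⟨p, hp, hpx, hps⟩ := hA.exists_mem_linear_one_eq_leftSlope x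
  exact hps ▸ hA.add_linear_one_mul_le hp hpx y

lemma add_rightSlope_mul_le (hf : IsTropSig f) (x y : ℝ) :
    f x + rightSlope f x * (y - x) ≤ f y := by
  obtain ⟨A, hA⟩ := isTropSig_iff_exists_isUpperEnvelope.1 hf
  obtain ⟨q, hq, hqx, hqs⟩ := hA.exists_mem_linear_one_eq_rightSlope x
  exact hqs ▸ hA.add_linear_one_mul_le hq hqx y

lemma leftSlope_le_of_forall_add_mul_le (hf : IsTropSig f)
    (h : ∀ y, f x + s * (y - x) ≤ f y) : leftSlope f x ≤ s := by
  obtain ⟨y, hy, hyx : y < x⟩ := ((hf.eventually_nhdsLE x).filter_mono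
    (nhdsWithin_mono _ Iio_subset_Iic_self) |>.and self_mem_nhdsWithin).exists
  have := h y
  rw [hy] at this
  nlinarith

lemma le_rightSlope_of_forall_add_mul_le (hf : IsTropSig f)
    (h : ∀ y, f x + s * (y - x) ≤ f y) : s ≤ rightSlope f x := by
  obtain ⟨y, hy, hxy : x < y⟩ := ((hf.eventually_nhdsGE x).filter_mono
    (nhdsWithin_mono _ Ioi_subset_Ici_self) |>.and self_mem_nhdsWithin).exists
  have := h y
  rw [hy] at this
  nlinarith

lemma leftSlope_le_rightSlope (hf : IsTropSig f) (x : ℝ) : leftSlope f x ≤ rightSlope f x :=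
  hf.le_rightSlope_of_forall_add_mul_le (hf.add_leftSlope_mul_le x)

lemma rightSlope_le_leftSlope_of_lt (hf : IsTropSig f) (hxy : x < y) :
    rightSlope f x ≤ leftSlope f y := by
  have hx := hf.add_rightSlope_mul_le x y
  have hy := hf.add_leftSlope_mul_le y x
  nlinarith

lemma rightSlope_mono (hf : IsTropSig f) : Monotone (rightSlope f) := by
  intro x y hxy
  rcases hxy.eq_or_lt with rfl | h
  · exact le_rfl
  · exact (hf.rightSlope_le_leftSlope_of_lt h).trans (hf.leftSlope_le_rightSlope y)

lemma differentiableAt_iff (hf : IsTropSig f) :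
    DifferentiableAt ℝ f x ↔ leftSlope f x = rightSlope f x := by
  refine ⟨fun hd => ?_, fun h => ?_⟩
  · rw [leftSlope, rightSlope, hd.derivWithin (uniqueDiffWithinAt_Iic x),
      hd.derivWithin (uniqueDiffWithinAt_Ici x)]
  · have hl := hasDerivWithinAt_of_eventually_eq_line (hf.eventually_nhdsLE x)
    have hr := hasDerivWithinAt_of_eventually_eq_line (hf.eventually_nhdsGE x)
    rw [h] at hl
    have := hl.union hr
    rw [Iic_union_Ici, hasDerivWithinAt_univ] at this
    exact this.differentiableAt

lemma mem_Ndiff_iff (hf : IsTropSig f) : x ∈ Ndiff f ↔ leftSlope f x < rightSlope f x := by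
  rw [show x ∈ Ndiff f ↔ ¬ DifferentiableAt ℝ f x from Iff.rfl, hf.differentiableAt_iff,
    (hf.leftSlope_le_rightSlope x).lt_iff_ne]

lemma exists_mem_Ioc_leftSlope_lt (hf : IsTropSig f) (h : rightSlope f x < rightSlope f y) :
    ∃ z ∈ Ioc x y, leftSlope f z < rightSlope f z := by
  have hxy : x < y := lt_of_not_ge fun hyx => h.not_ge (hf.rightSlope_mono hyx)
  -- `z` is the last point of `[x, y]` where the support line of slope `rightSlope f x` at `x`
  -- touches `f`.
  set s := rightSlope f x
  set S := Icc x y ∩ {u | f u ≤ f x + s * (u - x)}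
  have hSc : IsClosed S := isClosed_Icc.inter (isClosed_le hf.continuous (by fun_prop))
  have hxS : x ∈ S := ⟨left_mem_Icc.2 hxy.le, by simp⟩
  have hSb : BddAbove S := ⟨y, fun u hu => hu.1.2⟩
  set z := sSup S
  have hzS : z ∈ S := hSc.csSup_mem ⟨x, hxS⟩ hSb
  have hzy : z ≤ y := csSup_le ⟨x, hxS⟩ fun u hu => hu.1.2
  have hz : f z ≤ f x + s * (z - x) := hzS.2
  have hsupp : ∀ u, f z + s * (u - z) ≤ f u := fun u => by
    linear_combination hz + hf.add_rightSlope_mul_le x u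
  have hsz : s < rightSlope f z := by
    refine (hf.le_rightSlope_of_forall_add_mul_le hsupp).lt_of_ne fun hs => ?_
    have hzy' : z < y := hzy.lt_of_ne fun hzy' => h.ne (by rw [← hzy', ← hs])
    obtain ⟨u, ⟨hu, hzu : z < u⟩, huy : u < y⟩ := ((hf.eventually_nhdsGE z).filter_mono
      (nhdsWithin_mono _ Ioi_subset_Ici_self) |>.and self_mem_nhdsWithin
      |>.and (nhdsWithin_le_nhds (gt_mem_nhds hzy'))).exists
    have huS : u ∈ S := ⟨⟨(le_csSup hSb hxS).trans hzu.le, huy.le⟩, by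
      show f u ≤ _; rw [hu, ← hs]; linear_combination hz⟩
    exact (le_csSup hSb huS).not_gt hzu
  refine ⟨z, ⟨(le_csSup hSb hxS).lt_of_ne fun hxz => hsz.ne ?_, hzy⟩,
    (hf.leftSlope_le_of_forall_add_mul_le hsupp).trans_lt hsz⟩
  rw [show z = x from hxz.symm]

end IsTropSig

/-- On an upper envelope breaking at `x₀` with left slope `a`, pieces of slope at most `a` are
active only left of `x₀` and pieces of larger slope only right of it (or at `x₀`), so subtracting
the ramp `ε * max (t - x₀) 0` amounts to tilting the latter about `x₀`. -/
noncomputable def tilt (x₀ a ε : ℝ) (p : ℝ →ᵃ[ℝ] ℝ) : ℝ →ᵃ[ℝ] ℝ :=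
  if p.linear 1 ≤ a then p else p - ε • (AffineMap.id ℝ ℝ - AffineMap.const ℝ ℝ x₀)

lemma tilt_apply (x₀ a ε : ℝ) (p : ℝ →ᵃ[ℝ] ℝ) (t : ℝ) :
    tilt x₀ a ε p t = if p.linear 1 ≤ a then p t else p t - ε * (t - x₀) := by
  unfold tilt
  split_ifs <;> simp

namespace IsUpperEnvelope

variable {A : Finset (ℝ →ᵃ[ℝ] ℝ)} {f : ℝ → ℝ} {x₀ ε : ℝ}

lemma tilt_apply_le (h : IsUpperEnvelope A f) (hε : ε ≤ rightSlope f x₀ - leftSlope f x₀)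
    {p : ℝ →ᵃ[ℝ] ℝ} (hpA : p ∈ A) (hps : p.linear 1 ∉ Ioo (leftSlope f x₀) (rightSlope f x₀))
    (t : ℝ) : tilt x₀ (leftSlope f x₀) ε p t ≤ f t - ε * max (t - x₀) 0 := by
  have hf := h.isTropSig
  have hpt := h.1 p hpA t
  have hpx := h.1 p hpA x₀
  have hp_apply := p.apply_eq_add_linear_one_mul x₀ t
  have ha := hf.add_leftSlope_mul_le x₀ t
  have hb := hf.add_rightSlope_mul_le x₀ t
  rw [tilt_apply]
  split_ifs with hpa
  · rcases le_total t x₀ with ht | ht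
    · rw [max_eq_right (by linarith)]
      linarith
    · rw [max_eq_left (by linarith)]
      nlinarith [mul_le_mul_of_nonneg_right hpa (sub_nonneg.2 ht)]
  · have hpb : rightSlope f x₀ ≤ p.linear 1 := not_lt.1 fun h' => hps ⟨lt_of_not_ge hpa, h'⟩
    rcases le_total t x₀ with ht | ht
    · rw [max_eq_right (by linarith)]
      nlinarith [mul_le_mul_of_nonpos_right hpb (sub_nonpos.2 ht)]
    · rw [max_eq_left (by linarith)]
      linarith

lemma exists_tilt_apply_eq (h : IsUpperEnvelope A f) (hx₀ : leftSlope f x₀ < rightSlope f x₀)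
    (ε t : ℝ) : ∃ p ∈ A, p.linear 1 ∉ Ioo (leftSlope f x₀) (rightSlope f x₀) ∧
      tilt x₀ (leftSlope f x₀) ε p t = f t - ε * max (t - x₀) 0 := by
  have hf := h.isTropSig
  rcases lt_trichotomy t x₀ with ht | rfl | ht
  · obtain ⟨p, hpA, hpt⟩ := h.2 t
    have hpa : p.linear 1 ≤ leftSlope f x₀ :=
      (hf.le_rightSlope_of_forall_add_mul_le (h.add_linear_one_mul_le hpA hpt)).trans
        (hf.rightSlope_le_leftSlope_of_lt ht)
    refine ⟨p, hpA, fun hs => hs.1.not_ge hpa, ?_⟩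
    rw [tilt_apply, if_pos hpa, hpt, max_eq_right (by linarith)]
    ring
  · obtain ⟨p, hpA, hpx, hps⟩ := h.exists_mem_linear_one_eq_leftSlope t
    refine ⟨p, hpA, fun hs => hs.1.ne' hps, ?_⟩
    rw [tilt_apply, if_pos hps.le, hpx]
    simp
  · obtain ⟨p, hpA, hpt⟩ := h.2 t
    have hpb : rightSlope f x₀ ≤ p.linear 1 :=
      (hf.rightSlope_le_leftSlope_of_lt ht).trans
        (hf.leftSlope_le_of_forall_add_mul_le (h.add_linear_one_mul_le hpA hpt))
    refine ⟨p, hpA, fun hs => hs.2.not_ge hpb, ?_⟩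
    rw [tilt_apply, if_neg (by linarith), hpt, max_eq_left (by linarith)]

open Classical in
lemma sub_ramp (h : IsUpperEnvelope A f) (hx₀ : leftSlope f x₀ < rightSlope f x₀)
    (hε : ε ≤ rightSlope f x₀ - leftSlope f x₀) :
    IsUpperEnvelope ((A.filter fun p => p.linear 1 ∉ Ioo (leftSlope f x₀) (rightSlope f x₀)).image
      (tilt x₀ (leftSlope f x₀) ε)) fun t => f t - ε * max (t - x₀) 0 := by
  refine ⟨fun r hr t => ?_, fun t => ?_⟩
  · obtain ⟨p, hp, rfl⟩ := Finset.mem_image.1 hr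
    obtain ⟨hpA, hps⟩ := Finset.mem_filter.1 hp
    exact h.tilt_apply_le hε hpA hps t
  · obtain ⟨p, hpA, hps, hpt⟩ := h.exists_tilt_apply_eq hx₀ ε t
    exact ⟨_, Finset.mem_image_of_mem _ (Finset.mem_filter.2 ⟨hpA, hps⟩), hpt⟩

end IsUpperEnvelope

namespace IsTropSig

variable {f g : ℝ → ℝ} {x y x₀ ε : ℝ}

lemma finite_range_rightSlope (hf : IsTropSig f) : (range (rightSlope f)).Finite :=
  let ⟨A, hA⟩ := isTropSig_iff_exists_isUpperEnvelope.1 hf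
  (A.finite_toSet.image _).subset hA.range_rightSlope_subset

lemma mlen_eq_ncard_range_rightSlope (hf : IsTropSig f) :
    mlen f = (range (rightSlope f)).ncard := by
  classical
  obtain ⟨A, hA, hcard⟩ := hf.exists_isUpperEnvelope_card_eq_mlen
  refine le_antisymm ?_ ?_
  · -- The pieces realising a right slope already form an envelope, and have distinct slopes.
    set T := A.filter fun p => ∃ x, p x = f x ∧ p.linear 1 = rightSlope f x
    have hT : IsUpperEnvelope T f := ⟨fun p hp => hA.1 p (Finset.mem_filter.1 hp).1, fun x => by
      obtain ⟨q, hq, hqx, hqs⟩ := hA.exists_mem_linear_one_eq_rightSlope x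
      exact ⟨q, Finset.mem_filter.2 ⟨hq, x, hqx, hqs⟩, hqx⟩⟩
    calc mlen f ≤ T.card := hT.mlen_le_card
      _ = (T : Set (ℝ →ᵃ[ℝ] ℝ)).ncard := (ncard_coe_finset T).symm
      _ ≤ (range (rightSlope f)).ncard := by
        refine ncard_le_ncard_of_injOn (fun p => p.linear 1) ?_ ?_ hf.finite_range_rightSlope
        · rintro p hp
          obtain ⟨-, x, -, hps⟩ := Finset.mem_filter.1 hp
          exact ⟨x, hps.symm⟩
        · rintro p hp q hq hpq
          obtain ⟨hpA, x, hpx, -⟩ := Finset.mem_filter.1 hp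
          obtain ⟨hqA, y, hqy, -⟩ := Finset.mem_filter.1 hq
          exact hA.eq_of_linear_one_eq hpA hqA hpx hqy hpq
  · calc (range (rightSlope f)).ncard
          ≤ ((fun p => p.linear 1) '' (A : Set (ℝ →ᵃ[ℝ] ℝ))).ncard :=
          ncard_le_ncard hA.range_rightSlope_subset (A.finite_toSet.image _)
      _ ≤ (A : Set (ℝ →ᵃ[ℝ] ℝ)).ncard := ncard_image_le A.finite_toSet
      _ = mlen f := by rw [ncard_coe_finset, hcard]

lemma rightSlope_lt_of_Ndiff_subset (hf : IsTropSig f) (hg : IsTropSig g)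
    (h : Ndiff f ⊆ Ndiff g) (hxy : rightSlope f x < rightSlope f y) :
    rightSlope g x < rightSlope g y := by
  obtain ⟨z, ⟨hxz, hzy⟩, hz⟩ := hf.exists_mem_Ioc_leftSlope_lt hxy
  calc rightSlope g x ≤ leftSlope g z := hg.rightSlope_le_leftSlope_of_lt hxz
    _ < rightSlope g z := hg.mem_Ndiff_iff.1 (h (hf.mem_Ndiff_iff.2 hz))
    _ ≤ rightSlope g y := hg.rightSlope_mono hzy

lemma mlen_le_mlen_of_Ndiff_subset (hf : IsTropSig f) (hg : IsTropSig g)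
    (h : Ndiff f ⊆ Ndiff g) : mlen f ≤ mlen g := by
  have hfac : Function.FactorsThrough (rightSlope f) (rightSlope g) := fun x y hxy => by
    by_contra hne
    rcases lt_or_gt_of_ne hne with hlt | hlt
    · exact (hf.rightSlope_lt_of_Ndiff_subset hg h hlt).ne hxy
    · exact (hf.rightSlope_lt_of_Ndiff_subset hg h hlt).ne' hxy
  have hfin := hg.finite_range_rightSlope
  rw [hf.mlen_eq_ncard_range_rightSlope, hg.mlen_eq_ncard_range_rightSlope]
  calc (range (rightSlope f)).ncard
      ≤ (Function.extend (rightSlope g) (rightSlope f) 0 '' range (rightSlope g)).ncard := by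
        refine ncard_le_ncard ?_ (hfin.image _)
        rintro _ ⟨x, rfl⟩
        exact ⟨_, mem_range_self x, hfac.extend_apply 0 x⟩
    _ ≤ (range (rightSlope g)).ncard := ncard_image_le hfin

lemma sub_ramp (hf : IsTropSig f) (hx₀ : leftSlope f x₀ < rightSlope f x₀)
    (hε : ε ≤ rightSlope f x₀ - leftSlope f x₀) :
    IsTropSig fun t => f t - ε * max (t - x₀) 0 :=
  let ⟨_, hA⟩ := isTropSig_iff_exists_isUpperEnvelope.1 hf; (hA.sub_ramp hx₀ hε).isTropSig

lemma mlen_sub_ramp_lt (hf : IsTropSig f) (hx₀ : leftSlope f x₀ < rightSlope f x₀) :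
    mlen (fun t => f t - (rightSlope f x₀ - leftSlope f x₀) * max (t - x₀) 0) < mlen f := by
  classical
  obtain ⟨A, hA, hcard⟩ := hf.exists_isUpperEnvelope_card_eq_mlen
  obtain ⟨p, hpA, hpx, hps⟩ := hA.exists_mem_linear_one_eq_leftSlope x₀
  obtain ⟨q, hqA, hqx, hqs⟩ := hA.exists_mem_linear_one_eq_rightSlope x₀
  have hB := hA.sub_ramp hx₀ le_rfl
  refine hB.mlen_le_card.trans_lt ((Finset.card_image_le.lt_of_ne fun hinj => ?_).trans_le
    ((Finset.card_filter_le _ _).trans hcard.le))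
  -- With `ε` the full jump, the tilted right piece at `x₀` is the left piece.
  have hpq : p ≠ q := fun h => hx₀.ne (by rw [← hps, ← hqs, h])
  refine hpq (Finset.card_image_iff.1 hinj (Finset.mem_filter.2 ⟨hpA, fun hs => hs.1.ne' hps⟩)
    (Finset.mem_filter.2 ⟨hqA, fun hs => hs.2.ne hqs⟩) ?_)
  ext t
  rw [tilt_apply, tilt_apply, if_pos hps.le, if_neg (by linarith), p.apply_eq_add_linear_one_mul x₀,
    q.apply_eq_add_linear_one_mul x₀, hpx, hqx, hps, hqs]
  ring

end IsTropSig

namespace IsRep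

variable {φ f g f' g' : ℝ → ℝ} {x : ℝ}

lemma neg (h : IsRep φ f g) : IsRep (fun x => -φ x) g f :=
  ⟨h.2.1, h.1, fun x => by rw [neg_eq_iff_eq_neg, h.2.2 x, neg_sub]⟩

lemma leftSlope_eq (h : IsRep φ f g) (x : ℝ) :
    leftSlope φ x = leftSlope f x - leftSlope g x := by
  rw [funext h.2.2]
  exact ((hasDerivWithinAt_of_eventually_eq_line (h.1.eventually_nhdsLE x)).sub
    (hasDerivWithinAt_of_eventually_eq_line (h.2.1.eventually_nhdsLE x))).derivWithin
    (uniqueDiffWithinAt_Iic x)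

lemma rightSlope_eq (h : IsRep φ f g) (x : ℝ) :
    rightSlope φ x = rightSlope f x - rightSlope g x := by
  rw [funext h.2.2]
  exact ((hasDerivWithinAt_of_eventually_eq_line (h.1.eventually_nhdsGE x)).sub
    (hasDerivWithinAt_of_eventually_eq_line (h.2.1.eventually_nhdsGE x))).derivWithin
    (uniqueDiffWithinAt_Ici x)

lemma mem_Ndiff_of_mem_Ndiff (h : IsRep φ f g) (h' : IsRep φ f' g') (hf : x ∈ Ndiff f)
    (hg : x ∉ Ndiff g) : x ∈ Ndiff f' := by
  rw [h.1.mem_Ndiff_iff] at hf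
  rw [h.2.1.mem_Ndiff_iff, not_lt] at hg
  rw [h'.1.mem_Ndiff_iff]
  have := h'.2.1.leftSlope_le_rightSlope x
  linarith [h.leftSlope_eq x, h.rightSlope_eq x, h'.leftSlope_eq x, h'.rightSlope_eq x]

lemma exists_mlen_lt (h : IsRep φ f g) (hf : x ∈ Ndiff f) (hg : x ∈ Ndiff g) :
    ∃ f₂ g₂, IsRep φ f₂ g₂ ∧ (mlen f₂ < mlen f ∨ mlen g₂ < mlen g) := by
  rw [h.1.mem_Ndiff_iff] at hf
  rw [h.2.1.mem_Ndiff_iff] at hg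
  set ε := min (rightSlope f x - leftSlope f x) (rightSlope g x - leftSlope g x)
  refine ⟨fun t => f t - ε * max (t - x) 0, fun t => g t - ε * max (t - x) 0,
    ⟨h.1.sub_ramp hf (min_le_left _ _), h.2.1.sub_ramp hg (min_le_right _ _),
      fun t => by rw [h.2.2 t]; ring⟩, ?_⟩
  rcases min_choice (rightSlope f x - leftSlope f x) (rightSlope g x - leftSlope g x) with hε | hε
  · exact .inl (by rw [show ε = _ from hε]; exact h.1.mlen_sub_ramp_lt hf)
  · exact .inr (by rw [show ε = _ from hε]; exact h.2.1.mlen_sub_ramp_lt hg)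

end IsRep

theorem minimal_iff_reduced_one_var
    (φ f g : ℝ → ℝ) (hfg : IsRep φ f g) :
    IsMinimalRep φ f g ↔ Ndiff f ∩ Ndiff g = ∅ := by
  refine ⟨fun hmin => eq_empty_iff_forall_notMem.2 fun x ⟨hf, hg⟩ => ?_,
    fun hred => ⟨hfg, fun f' g' h' => ⟨?_, ?_⟩⟩⟩
  · obtain ⟨f₂, g₂, h₂, hlt | hlt⟩ := hfg.exists_mlen_lt hf hg
    · exact hlt.not_ge (hmin.2 f₂ g₂ h₂).1
    · exact hlt.not_ge (hmin.2 f₂ g₂ h₂).2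
  · exact hfg.1.mlen_le_mlen_of_Ndiff_subset h'.1 fun x hx =>
      hfg.mem_Ndiff_of_mem_Ndiff h' hx fun hg => eq_empty_iff_forall_notMem.1 hred x ⟨hx, hg⟩
  · exact hfg.2.1.mlen_le_mlen_of_Ndiff_subset h'.2.1 fun x hx =>
      hfg.neg.mem_Ndiff_of_mem_Ndiff h'.neg hx fun hf =>
        eq_empty_iff_forall_notMem.1 hred x ⟨hf, hx⟩
end
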